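/- The Fourier–Stieltjes coefficients of the weak limit measure μ are given by μ̂(k) = ∏_{m≥1} (1/3)(1 + 2 cos(2πk / 2^m)) for every k ∈ ℤ. -/

import Mathlib

open MeasureTheory Filter Topology Real
open scoped ENNReal

noncomputable section

/-- Stern's diatomic sequence: s(0)=0, s(1)=1, s(2n)=s(n), s(2n+1)=s(n)+s(n+1). -/
def stern : ℕ → ℕ
  | 0 => 0
  | 1 => 1
  | n + 2 =>
    if h : n % 2 = 0 then stern (n / 2 + 1)
    else stern (n / 2 + 1) + stern (n / 2 + 2)
decreasing_by all_goals omega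
/-- The probability measure μ_n = 3^{-n} ∑_{m=0}^{2^n-1} s(2^n+m) δ_{m/2^n} on the 1-torus. -/
def sternMeasure (n : ℕ) : Measure UnitAddCircle :=
  ((3 : ℝ≥0∞) ^ n)⁻¹ • ∑ m ∈ Finset.range (2 ^ n),
    (stern (2 ^ n + m) : ℝ≥0∞) • Measure.dirac ((m / 2 ^ n : ℝ) : UnitAddCircle)
/-- The Fourier–Stieltjes coefficient ν̂(k) = ∫_𝕋 e^{-2πikx} dν(x) of a measure ν on the 1-torus. -/
def fourierCoeffMeasure (ν : Measure UnitAddCircle) (k : ℤ) : ℂ :=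
  ∫ x, fourier (-k) x ∂ν

/-!
With `ω_n = e^{-2πik/2^n}` one has `μ̂_n(k) = 3^{-n} P_n(ω_n)`, where
`P_n(z) = sternRowSum n z = ∑_{m < 2^n} s(2^n + m) z^m`. Splitting `P_{n+1}` into even and odd exponents, the Stern
recursion gives `P_{n+1}(z) = (1 + z) P_n(z²) + z Q_n(z²)` with `Q_n` the row shifted by one, and
since `s(2^n) = s(2^{n+1}) = 1` the shift is undone at a `2^n`-th root of unity: `w Q_n(w) = P_n(w)`.
Hence `P_{n+1}(ω_{n+1}) = (1 + 2 cos(2πk/2^{n+1})) P_n(ω_n)`, so `μ̂_n(k)` is the `n`-th partial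
product. As `x ↦ e^{-2πikx}` is continuous, `μ̂_n(k) → μ̂(k)`.
-/

open Finset

lemma stern_two_mul {n : ℕ} (hn : n ≠ 0) : stern (2 * n) = stern n := by
  obtain ⟨m, rfl⟩ := Nat.exists_eq_succ_of_ne_zero hn
  rw [show 2 * (m + 1) = 2 * m + 2 by ring, stern]
  simp

lemma stern_two_mul_add_one {n : ℕ} (hn : n ≠ 0) :
    stern (2 * n + 1) = stern n + stern (n + 1) := by
  obtain ⟨m, rfl⟩ := Nat.exists_eq_succ_of_ne_zero hn
  rw [show 2 * (m + 1) + 1 = (2 * m + 1) + 2 by ring, stern]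
  simp [show (2 * m + 1) / 2 = m by omega]

lemma stern_two_pow (n : ℕ) : stern (2 ^ n) = 1 := by
  induction n with
  | zero => simp [stern]
  | succ n ih => rw [pow_succ', stern_two_mul (by positivity), ih]

lemma Finset.sum_range_two_mul {M : Type*} [AddCommMonoid M] (f : ℕ → M) (n : ℕ) :
    ∑ i ∈ range (2 * n), f i = ∑ i ∈ range n, f (2 * i) + ∑ i ∈ range n, f (2 * i + 1) := by
  induction n with
  | zero => simp
  | succ n ih =>
    rw [show 2 * (n + 1) = 2 * n + 1 + 1 by ring, sum_range_succ, sum_range_succ, ih,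
      sum_range_succ, sum_range_succ]
    abel

def sternRowSum {R : Type*} [CommSemiring R] (n : ℕ) (z : R) : R :=
  ∑ m ∈ range (2 ^ n), (stern (2 ^ n + m) : R) * z ^ m

section CommSemiring

variable {R : Type*} [CommSemiring R]

lemma sternRowSum_succ (n : ℕ) (z : R) :
    sternRowSum (n + 1) z = (1 + z) * sternRowSum n (z ^ 2)
      + z * ∑ m ∈ range (2 ^ n), (stern (2 ^ n + m + 1) : R) * (z ^ 2) ^ m := by
  rw [sternRowSum, pow_succ', sum_range_two_mul, ← sum_add_distrib, sternRowSum, add_mul,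
    one_mul, add_assoc, mul_sum, mul_sum, ← sum_add_distrib, ← sum_add_distrib]
  refine sum_congr rfl fun m _ => ?_
  have hm : 2 ^ n + m ≠ 0 := by positivity
  rw [← mul_add, stern_two_mul hm, show 2 * 2 ^ n + (2 * m + 1) = 2 * (2 ^ n + m) + 1 by ring,
    stern_two_mul_add_one hm, Nat.cast_add, pow_succ, pow_mul]
  ring

lemma mul_sum_stern_shift_add_one (n : ℕ) (w : R) :
    w * ∑ m ∈ range (2 ^ n), (stern (2 ^ n + m + 1) : R) * w ^ m + 1
      = sternRowSum n w + w ^ 2 ^ n := by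
  have h := sum_range_succ' (fun m => (stern (2 ^ n + m) : R) * w ^ m) (2 ^ n)
  rw [sum_range_succ, ← two_mul, ← pow_succ', stern_two_pow] at h
  simp only [add_zero, stern_two_pow, pow_zero, Nat.cast_one, one_mul] at h
  rw [sternRowSum, h, mul_sum]
  congr 1
  refine sum_congr rfl fun m _ => ?_
  rw [add_assoc, pow_succ]
  ring

end CommSemiring

section Field

variable {K : Type*} [Field K]

lemma sternRowSum_succ_of_pow_eq_one {n : ℕ} {z : K} (hz : z ^ 2 ^ (n + 1) = 1) :
    sternRowSum (n + 1) z = (1 + z + z⁻¹) * sternRowSum n (z ^ 2) := by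
  have hz0 : z ≠ 0 := by
    rintro rfl
    simp at hz
  have hshift := mul_sum_stern_shift_add_one n (z ^ 2)
  rw [← pow_mul, ← pow_succ', hz, add_left_inj] at hshift
  rw [sternRowSum_succ, ← hshift]
  field_simp

lemma pow_two_pow_eq_one {ω : ℕ → K} (h0 : ω 0 = 1) (hsq : ∀ n, ω (n + 1) ^ 2 = ω n) (n : ℕ) :
    ω n ^ 2 ^ n = 1 := by
  induction n with
  | zero => simpa using h0
  | succ n ih => rw [pow_succ', pow_mul, hsq, ih]

lemma sternRowSum_eq_prod {ω : ℕ → K} (h0 : ω 0 = 1) (hsq : ∀ n, ω (n + 1) ^ 2 = ω n)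
    (n : ℕ) : sternRowSum n (ω n) = ∏ m ∈ Icc 1 n, (1 + ω m + (ω m)⁻¹) := by
  induction n with
  | zero => simp [sternRowSum, stern]
  | succ n ih =>
    rw [sternRowSum_succ_of_pow_eq_one (pow_two_pow_eq_one h0 hsq _), hsq, ih,
      prod_Icc_succ_top (by omega), mul_comm]

end Field

lemma tendsto_integral_rclike_of_forall_tendsto_integral {X ι 𝕜 : Type*} [RCLike 𝕜]
    [TopologicalSpace X] [CompactSpace X] [MeasurableSpace X] [OpensMeasurableSpace X]
    {l : Filter ι} {ν : ι → Measure X} [∀ i, IsFiniteMeasure (ν i)] {μ : Measure X}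
    [IsFiniteMeasure μ]
    (h : ∀ f : C(X, ℝ), Tendsto (fun i => ∫ x, f x ∂ν i) l (𝓝 (∫ x, f x ∂μ))) (g : C(X, 𝕜)) :
    Tendsto (fun i => ∫ x, g x ∂ν i) l (𝓝 (∫ x, g x ∂μ)) := by
  let νF (i : ι) : FiniteMeasure X := ⟨ν i, inferInstance⟩
  let μF : FiniteMeasure X := ⟨μ, inferInstance⟩
  have hweak : Tendsto νF l (𝓝 μF) :=
    FiniteMeasure.tendsto_of_forall_integral_tendsto fun f => h f.toContinuousMap
  exact (FiniteMeasure.tendsto_iff_forall_integral_rclike_tendsto 𝕜).1 hweak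
    (BoundedContinuousFunction.mkOfCompact g)

instance isFiniteMeasure_sternMeasure (n : ℕ) : IsFiniteMeasure (sternMeasure n) :=
  have (m : ℕ) : IsFiniteMeasure
      ((stern (2 ^ n + m) : ℝ≥0∞) • Measure.dirac ((m / 2 ^ n : ℝ) : UnitAddCircle)) :=
    Measure.smul_finite _ (ENNReal.natCast_ne_top _)
  Measure.smul_finite _ (by simp)

lemma integral_sternMeasure {E : Type*} [NormedAddCommGroup E] [NormedSpace ℝ E]
    [CompleteSpace E] (f : UnitAddCircle → E) (n : ℕ) :
    ∫ x, f x ∂sternMeasure n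
      = ((3 : ℝ) ^ n)⁻¹ • ∑ m ∈ range (2 ^ n), (stern (2 ^ n + m) : ℝ) • f ((m / 2 ^ n : ℝ)) := by
  rw [sternMeasure, integral_smul_measure, integral_finsetSum_measure fun m _ =>
    (integrable_dirac enorm_lt_top).smul_measure (ENNReal.natCast_ne_top _)]
  simp [integral_smul_measure]

section Fourier

variable {T : ℝ}

lemma fourier_coe_natCast_mul (k : ℤ) (m : ℕ) (x : ℝ) :
    fourier k ((m * x : ℝ) : AddCircle T) = fourier k (x : AddCircle T) ^ m := by
  rw [fourier_coe_apply, fourier_coe_apply, ← Complex.exp_nat_mul]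
  congr 1
  push_cast
  ring

lemma one_add_fourier_add_inv (k : ℤ) (x : ℝ) :
    1 + fourier k (x : AddCircle T) + (fourier k (x : AddCircle T))⁻¹
      = ((1 + 2 * cos (2 * π * k * x / T) : ℝ) : ℂ) := by
  rw [fourier_coe_apply, ← Complex.exp_neg, add_assoc]
  push_cast
  rw [Complex.two_cos]
  ring_nf

end Fourier

lemma fourierCoeffMeasure_sternMeasure (k : ℤ) (n : ℕ) :
    fourierCoeffMeasure (sternMeasure n) k
      = ((∏ m ∈ Icc 1 n, (1 / 3) * (1 + 2 * cos (2 * π * k / 2 ^ m)) : ℝ) : ℂ) := by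
  set ω : ℕ → ℂ := fun n => fourier (-k) ((((2 : ℝ) ^ n)⁻¹ : ℝ) : UnitAddCircle)
  have hpoint (m : ℕ) : fourier (-k) ((m / 2 ^ n : ℝ) : UnitAddCircle) = ω n ^ m := by
    rw [div_eq_mul_inv, fourier_coe_natCast_mul]
  have h0 : ω 0 = 1 := by
    simp only [ω, pow_zero, inv_one, AddCircle.coe_period, fourier_eval_zero]
  have hsq (j : ℕ) : ω (j + 1) ^ 2 = ω j := by
    simp only [ω]
    rw [← fourier_coe_natCast_mul]
    congr 3
    field_simp
    ring
  have hfactor (m : ℕ) : 1 + ω m + (ω m)⁻¹ = ((1 + 2 * cos (2 * π * k / 2 ^ m) : ℝ) : ℂ) := by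
    rw [one_add_fourier_add_inv, Int.cast_neg, ← cos_neg]
    congr 4
    ring
  rw [fourierCoeffMeasure, integral_sternMeasure]
  simp only [hpoint, Complex.real_smul, Complex.ofReal_natCast]
  rw [← sternRowSum, sternRowSum_eq_prod h0 hsq, prod_mul_distrib, prod_const, Nat.card_Icc,
    Nat.add_sub_cancel]
  simp only [hfactor]
  rw [Complex.ofReal_mul, Complex.ofReal_prod, one_div, inv_pow]

/-- For the weak limit μ of (μ_n), the Fourier–Stieltjes coefficients are given by the
convergent infinite product μ̂(k) = ∏_{m≥1} (1/3)(1 + 2 cos(2πk/2^m)). -/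
theorem fourierCoeff_limit_eq_prod (μ : Measure UnitAddCircle)
    (hμ : IsProbabilityMeasure μ)
    (hlim : ∀ f : C(UnitAddCircle, ℝ),
      Tendsto (fun n => ∫ x, f x ∂(sternMeasure n)) atTop (𝓝 (∫ x, f x ∂μ)))
    (k : ℤ) :
    Tendsto
      (fun n => ((∏ m ∈ Finset.Icc 1 n,
        (1 / 3) * (1 + 2 * Real.cos (2 * π * (k : ℝ) / 2 ^ m)) : ℝ) : ℂ))
      atTop (𝓝 (fourierCoeffMeasure μ k)) := by
  exact (tendsto_integral_rclike_of_forall_tendsto_integral hlim (fourier (-k))).congr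
    (fourierCoeffMeasure_sternMeasure k)
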